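/- The sum of the Neumann half-plane heat kernel H_N(t,x,y,x',y') = (4πt)⁻¹·exp(−(x−x')²/(4t))·(exp(−(y−y')²/(4t)) + exp(−(y+y')²/(4t))) and the Robin correction H_corr(t,x,y,x',y') = −(κ·e^{κ(y+y')}·e^{κ²t}/√(4πt))·exp(−(x−x')²/(4t))·erfc((y+y')/√(4t) + κ√t) satisfies the Robin boundary condition: ∂_y(H_N + H_corr) = κ·(H_N + H_corr) at y = 0, for every t > 0, x, x' ∈ ℝ, y' ≥ 0. -/

import Mathlib

/-!
The Neumann part is even in `y`, so its `y`-derivative vanishes at `y = 0`. The correction is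
`-κ (4πt)^{-1/2} e^{-(x-x')²/4t} φ(y + y')` with `φ(y) = e^{κy + κ²t} erfc(y/√(4t) + κ√t)`, and
completing the square in the derivative of `erfc` gives `φ' = κφ - e^{-y²/4t}/√(πt)`. At `y = 0`
the term `-e^{-y'²/4t}/√(πt)` contributes exactly `κ` times the Neumann part.
-/

open Real

/-- The complementary error function `erfc(z) = (2/√π)·∫_z^∞ e^{−s²} ds`. -/
noncomputable def erfc (z : ℝ) : ℝ :=
  (2 / Real.sqrt π) * ∫ s in Set.Ioi z, Real.exp (-s ^ 2)

open Set MeasureTheory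

theorem hasDerivAt_setIntegral_Ioi {E : Type*} [NormedAddCommGroup E] [NormedSpace ℝ E]
    [CompleteSpace E] {f : ℝ → E} (hf : Integrable f) (hc : Continuous f) (z : ℝ) :
    HasDerivAt (fun w => ∫ s in Ioi w, f s) (-f z) z := by
  have hsplit : ∀ w, ∫ s in Ioi w, f s = (∫ s in Ioi 0, f s) - ∫ s in (0 : ℝ)..w, f s := by
    intro w
    rw [← intervalIntegral.integral_Ioi_sub_Ioi' hf.integrableOn hf.integrableOn, sub_sub_cancel]
  rw [funext hsplit]
  exact (hc.integral_hasStrictDerivAt 0 z).hasDerivAt.const_sub _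

theorem hasDerivAt_erfc (z : ℝ) : HasDerivAt erfc (-(2 / √π) * exp (-z ^ 2)) z := by
  have hint : Integrable fun s : ℝ => exp (-s ^ 2) := by
    simpa using integrable_exp_neg_mul_sq one_pos
  rw [neg_mul, ← mul_neg]
  exact (hasDerivAt_setIntegral_Ioi hint (by fun_prop) z).const_mul _

theorem Function.Even.hasDerivAt_zero {E : Type*} [NormedAddCommGroup E] [NormedSpace ℝ E]
    {f : ℝ → E} (hf : Function.Even f) (hd : DifferentiableAt ℝ f 0) : HasDerivAt f 0 0 := by
  have h : deriv f 0 = -deriv f 0 := by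
    simpa [hf _] using deriv_comp_neg (f := f) (x := 0)
  have h2 : (2 : ℝ) • deriv f 0 = 0 := by
    rw [two_smul]
    nth_rewrite 2 [h]
    exact add_neg_cancel _
  exact ((smul_eq_zero.mp h2).resolve_left two_ne_zero) ▸ hd.hasDerivAt

theorem sqrt_four_mul (t : ℝ) : √(4 * t) = 2 * √t := by
  rw [sqrt_mul zero_le_four, show (4 : ℝ) = 2 ^ 2 by norm_num, sqrt_sq zero_le_two]

theorem sq_div_sqrt_add_mul_sqrt {t : ℝ} (ht : 0 < t) (κ y : ℝ) :
    (y / √(4 * t) + κ * √t) ^ 2 = y ^ 2 / (4 * t) + κ * y + κ ^ 2 * t := by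
  have hst : √t ^ 2 = t := sq_sqrt ht.le
  have : √t ≠ 0 := (sqrt_pos.2 ht).ne'
  rw [sqrt_four_mul]
  field_simp
  rw [hst]
  ring

noncomputable def robinProfile (κ t y : ℝ) : ℝ :=
  exp (κ * y) * exp (κ ^ 2 * t) * erfc (y / √(4 * t) + κ * √t)

theorem hasDerivAt_robinProfile (κ : ℝ) {t : ℝ} (ht : 0 < t) (y : ℝ) :
    HasDerivAt (robinProfile κ t)
      (κ * robinProfile κ t y - exp (-(y ^ 2 / (4 * t))) / √(π * t)) y := by
  have harg : HasDerivAt (fun y => y / √(4 * t) + κ * √t) (1 / √(4 * t)) y :=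
    ((hasDerivAt_id y).div_const _).add_const _
  have h : HasDerivAt (robinProfile κ t) _ y :=
    ((((hasDerivAt_id y).const_mul κ).exp).mul_const (exp (κ ^ 2 * t))).mul
      ((hasDerivAt_erfc _).comp y harg)
  refine h.congr_deriv ?_
  have hgauss : exp (-(y / √(4 * t) + κ * √t) ^ 2) * (exp (κ * y) * exp (κ ^ 2 * t))
      = exp (-(y ^ 2 / (4 * t))) := by
    rw [← exp_add, ← exp_add, sq_div_sqrt_add_mul_sqrt ht]
    ring_nf
  have hcoef : 2 / √π * (1 / √(4 * t)) = 1 / √(π * t) := by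
    have : 0 < √t := sqrt_pos.2 ht
    rw [sqrt_four_mul, sqrt_mul pi_pos.le]
    field_simp
  simp only [id, robinProfile]
  rw [← hgauss]
  linear_combination
    (-(exp (κ * y) * exp (κ ^ 2 * t) * exp (-(y / √(4 * t) + κ * √t) ^ 2))) * hcoef

theorem robin_heat_kernel_boundary_condition_general (κ : ℝ) :
    let HN : ℝ → ℝ → ℝ → ℝ → ℝ → ℝ := fun t x y x' y' =>
      (4 * π * t)⁻¹ * Real.exp (-((x - x') ^ 2 / (4 * t))) *
        (Real.exp (-((y - y') ^ 2 / (4 * t))) + Real.exp (-((y + y') ^ 2 / (4 * t))))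
    let Hcorr : ℝ → ℝ → ℝ → ℝ → ℝ → ℝ := fun t x y x' y' =>
      -(κ * Real.exp (κ * (y + y')) * Real.exp (κ ^ 2 * t) / Real.sqrt (4 * π * t)) *
        Real.exp (-((x - x') ^ 2 / (4 * t))) *
        erfc ((y + y') / Real.sqrt (4 * t) + κ * Real.sqrt t)
    ∀ t : ℝ, 0 < t → ∀ x x' : ℝ, ∀ y' : ℝ, 0 ≤ y' →
      deriv (fun y => HN t x y x' y' + Hcorr t x y x' y') 0 =
        κ * (HN t x 0 x' y' + Hcorr t x 0 x' y') := by
  intro HN Hcorr t ht x x' y' _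
  set G := exp (-((x - x') ^ 2 / (4 * t)))
  set N : ℝ → ℝ := fun y => exp (-((y - y') ^ 2 / (4 * t))) + exp (-((y + y') ^ 2 / (4 * t)))
  have hsplit : (fun y => HN t x y x' y' + Hcorr t x y x' y') =
      fun y => (4 * π * t)⁻¹ * G * N y - κ / √(4 * π * t) * G * robinProfile κ t (y + y') := by
    funext y
    simp only [HN, Hcorr, N, robinProfile, mul_add]
    ring
  have hN : HasDerivAt N 0 0 :=
    Function.Even.hasDerivAt_zero (fun y => by simp only [N]; rw [add_comm]; ring_nf) (by fun_prop)
  have hR : HasDerivAt (fun y => robinProfile κ t (y + y'))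
      (κ * robinProfile κ t y' - exp (-(y' ^ 2 / (4 * t))) / √(π * t)) 0 := by
    simpa using (hasDerivAt_robinProfile κ ht (0 + y')).comp_add_const 0 y'
  have hD := (hN.const_mul ((4 * π * t)⁻¹ * G)).fun_sub (hR.const_mul (κ / √(4 * π * t) * G))
  rw [hsplit, hD.deriv]
  have hcoef : (√(4 * π * t))⁻¹ * (√(π * t))⁻¹ = 2 * (4 * π * t)⁻¹ := by
    rw [← mul_inv, ← sqrt_mul (by positivity), show 4 * π * t * (π * t) = (2 * π * t) ^ 2 by ring,
      sqrt_sq (by positivity)]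
    field_simp
    ring
  simp only [HN, Hcorr, robinProfile, zero_sub, zero_add, neg_sq]
  linear_combination (κ * G * exp (-(y' ^ 2 / (4 * t)))) * hcoef

/-- The sum of the Neumann half-plane heat kernel and the Robin correction term
satisfies the Robin boundary condition `∂_y(H_N + H_corr) = κ·(H_N + H_corr)`
at `y = 0`, for every `t > 0`, `x, x' ∈ ℝ` and `y' ≥ 0`. -/
theorem robin_heat_kernel_boundary_condition (κ : ℝ) (hκ : 0 < κ) :
    let HN : ℝ → ℝ → ℝ → ℝ → ℝ → ℝ := fun t x y x' y' =>
      (4 * π * t)⁻¹ * Real.exp (-((x - x') ^ 2 / (4 * t))) *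
        (Real.exp (-((y - y') ^ 2 / (4 * t))) + Real.exp (-((y + y') ^ 2 / (4 * t))))
    let Hcorr : ℝ → ℝ → ℝ → ℝ → ℝ → ℝ := fun t x y x' y' =>
      -(κ * Real.exp (κ * (y + y')) * Real.exp (κ ^ 2 * t) / Real.sqrt (4 * π * t)) *
        Real.exp (-((x - x') ^ 2 / (4 * t))) *
        erfc ((y + y') / Real.sqrt (4 * t) + κ * Real.sqrt t)
    ∀ t : ℝ, 0 < t → ∀ x x' : ℝ, ∀ y' : ℝ, 0 ≤ y' →
      deriv (fun y => HN t x y x' y' + Hcorr t x y x' y') 0 =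
        κ * (HN t x 0 x' y' + Hcorr t x 0 x' y') :=
  robin_heat_kernel_boundary_condition_general κ
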